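/- Let 0 < σ_ℓ < 1 and s_i² satisfy s_i² < σ_i² for i ≤ ℓ, and s_i² > σ² for i ≤ ℓ where σ_{ℓ+1}² < σ² < σ_ℓ². Consider U_ℓ(α) = Σ_{i=1}^ℓ φ_i(α)² s_i² + 2σ² Σ_{i=1}^ℓ γ_i(α). If 0 < α² < σ_{ℓ+1}²/(1 − σ_{ℓ+1}²), then U_ℓ'(α) < 0; hence any minimizer α_ℓ of U_ℓ on (0, ∞) satisfies α_ℓ² > σ_{ℓ+1}²/(1 − σ_{ℓ+1}²). -/

import Mathlib

/-!
Each summand of `U` has derivative `4αc(α²(s² - σ²) - σ²c)/(c + α²)³` with `c = σᵢ²`, so its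
sign is that of `α²(s² - σ²) - σ²c`. Since `c² < s² < c` forces `s² < c ≤ 1`, this is at most
`c(α²(1 - σ²) - σ²)`, which is negative once `α² < σ²/(1 - σ²)`; the threshold
`σ_{ℓ+1}²/(1 - σ_{ℓ+1}²)` lies below this because `σ_{ℓ+1}² < σ²`. A minimizer on the open
half-line is a critical point, so it cannot lie at or below the threshold.
-/

open Finset

noncomputable def upreSummand (c s2 v α : ℝ) : ℝ :=
  (α ^ 2 / (c + α ^ 2)) ^ 2 * s2 + 2 * v * (c / (c + α ^ 2))

theorem hasDerivAt_upreSummand (c s2 v : ℝ) {α : ℝ} (h : c + α ^ 2 ≠ 0) :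
    HasDerivAt (upreSummand c s2 v)
      (4 * α * c * (α ^ 2 * (s2 - v) - v * c) / (c + α ^ 2) ^ 3) α := by
  have hsq : HasDerivAt (fun β : ℝ => β ^ 2) (2 * α) α := by simpa using hasDerivAt_pow 2 α
  have hden : HasDerivAt (fun β : ℝ => c + β ^ 2) (2 * α) α := hsq.const_add c
  have hφ := ((hsq.fun_div hden h).fun_pow 2).mul_const s2
  have hγ := ((hasDerivAt_const α c).fun_div hden h).const_mul (2 * v)
  refine (hφ.add hγ).congr_deriv ?_
  norm_num only [Nat.cast_ofNat, pow_one]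
  field_simp
  ring

theorem upreSummand_numerator_neg {c s2 v a : ℝ} (hc0 : 0 < c) (hc1 : c ≤ 1) (hs : s2 ≤ c)
    (hv : 0 ≤ v) (ha : 0 ≤ a) (hav : a * (1 - v) < v) :
    a * (s2 - v) - v * c < 0 := by
  calc a * (s2 - v) - v * c ≤ a * (c - v) - v * c := by gcongr
    _ ≤ c * (a * (1 - v) - v) := by nlinarith [mul_nonneg ha hv]
    _ < 0 := mul_neg_of_pos_of_neg hc0 (by linarith)

theorem mul_one_sub_lt_of_le_div_one_sub {a t v : ℝ} (ha : 0 < a) (hat : a ≤ t / (1 - t))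
    (htv : t < v) : a * (1 - v) < v := by
  rcases lt_or_ge t 1 with ht | ht
  · have : a * (1 - t) ≤ t := (le_div_iff₀ (sub_pos.2 ht)).1 hat
    nlinarith
  · have : t / (1 - t) ≤ 0 := div_nonpos_of_nonneg_of_nonpos (by linarith) (by linarith)
    linarith

theorem deriv_sum_upreSummand_neg {ι : Type*} {I : Finset ι} (hI : I.Nonempty) {c s2 : ι → ℝ}
    {v α : ℝ} (hc : ∀ i ∈ I, 0 < c i ∧ c i ≤ 1 ∧ s2 i ≤ c i) (hv : 0 ≤ v) (hα : 0 < α)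
    (hαv : α ^ 2 * (1 - v) < v) :
    deriv (fun β => ∑ i ∈ I, upreSummand (c i) (s2 i) v β) α < 0 := by
  have hden : ∀ i ∈ I, 0 < c i + α ^ 2 := fun i hi => by linarith [(hc i hi).1, pow_pos hα 2]
  rw [(HasDerivAt.fun_sum fun i hi => hasDerivAt_upreSummand (c i) (s2 i) v (hden i hi).ne').deriv]
  refine sum_neg (fun i hi => ?_) hI
  obtain ⟨hc0, hc1, hs⟩ := hc i hi
  have hnum := upreSummand_numerator_neg hc0 hc1 hs hv (sq_nonneg α) hαv
  exact div_neg_of_neg_of_pos (mul_neg_of_pos_of_neg (by positivity) hnum) (pow_pos (hden i hi) 3)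

theorem upre_lower_bound_general (ℓ : ℕ) (hℓ : 0 < ℓ) (σs s : ℕ → ℝ) (σ : ℝ)
    (hnoise : (σs (ℓ+1))^2 < σ^2 ∧ σ^2 < (σs ℓ)^2)
    (hs : ∀ i ∈ Finset.Icc 1 ℓ, (σs i)^4 < (s i)^2 ∧ (s i)^2 < (σs i)^2)
    (γ φ : ℕ → ℝ → ℝ)
    (hγ : ∀ i α, γ i α = (σs i)^2 / ((σs i)^2 + α^2))
    (hφ : ∀ i α, φ i α = α^2 / ((σs i)^2 + α^2))
    (U : ℝ → ℝ)
    (hU : ∀ α, U α = ∑ i ∈ Finset.Icc 1 ℓ, (φ i α)^2 * (s i)^2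
                      + 2 * σ^2 * ∑ i ∈ Finset.Icc 1 ℓ, γ i α) :
    (∀ α : ℝ, 0 < α → α^2 < (σs (ℓ+1))^2 / (1 - (σs (ℓ+1))^2) → deriv U α < 0) ∧
    (∀ αℓ : ℝ, 0 < αℓ → IsMinOn U (Set.Ioi 0) αℓ →
        αℓ^2 > (σs (ℓ+1))^2 / (1 - (σs (ℓ+1))^2)) := by
  have hU_eq : U = fun α => ∑ i ∈ Icc 1 ℓ, upreSummand (σs i ^ 2) (s i ^ 2) (σ ^ 2) α := by
    funext α
    simp only [hU, hφ, hγ, upreSummand, mul_sum, ← sum_add_distrib]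
  have hσs : ∀ i ∈ Icc 1 ℓ, 0 < σs i ^ 2 ∧ σs i ^ 2 ≤ 1 ∧ s i ^ 2 ≤ σs i ^ 2 := by
    intro i hi
    obtain ⟨h4, h2⟩ := hs i hi
    have h4' : (σs i ^ 2) ^ 2 < s i ^ 2 := by rwa [← pow_mul]
    exact ⟨by nlinarith, by nlinarith, h2.le⟩
  have hderiv_neg : ∀ α : ℝ, 0 < α → α ^ 2 ≤ σs (ℓ+1) ^ 2 / (1 - σs (ℓ+1) ^ 2) →
      deriv U α < 0 := fun α hα hαt => by
    rw [hU_eq]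
    exact deriv_sum_upreSummand_neg (nonempty_Icc.2 hℓ) hσs (sq_nonneg σ) hα
      (mul_one_sub_lt_of_le_div_one_sub (pow_pos hα 2) hαt hnoise.1)
  refine ⟨fun α hα hαt => hderiv_neg α hα hαt.le, fun αℓ hαℓ hmin => ?_⟩
  by_contra! hαt
  exact (hderiv_neg αℓ hαℓ hαt).ne (hmin.isLocalMin (Ioi_mem_nhds hαℓ)).deriv_eq_zero

theorem upre_lower_bound (ℓ : ℕ) (hℓ : 0 < ℓ) (σs s : ℕ → ℝ) (σ : ℝ)
    (hpos : ∀ i ∈ Finset.Icc 1 (ℓ+1), 0 < σs i)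
    (hord : ∀ i ∈ Finset.Icc 1 (ℓ+1), ∀ j ∈ Finset.Icc 1 (ℓ+1), i ≤ j → σs j ≤ σs i)
    (hσℓ1 : σs (ℓ+1) < 1)
    (hnoise : (σs (ℓ+1))^2 < σ^2 ∧ σ^2 < (σs ℓ)^2)
    (hs : ∀ i ∈ Finset.Icc 1 ℓ, (σs i)^4 < (s i)^2 ∧ (s i)^2 < (σs i)^2)
    (γ φ : ℕ → ℝ → ℝ)
    (hγ : ∀ i α, γ i α = (σs i)^2 / ((σs i)^2 + α^2))
    (hφ : ∀ i α, φ i α = α^2 / ((σs i)^2 + α^2))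
    (U : ℝ → ℝ)
    (hU : ∀ α, U α = ∑ i ∈ Finset.Icc 1 ℓ, (φ i α)^2 * (s i)^2
                      + 2 * σ^2 * ∑ i ∈ Finset.Icc 1 ℓ, γ i α) :
    (∀ α : ℝ, 0 < α → α^2 < (σs (ℓ+1))^2 / (1 - (σs (ℓ+1))^2) → deriv U α < 0) ∧
    (∀ αℓ : ℝ, 0 < αℓ → IsMinOn U (Set.Ioi 0) αℓ →
        αℓ^2 > (σs (ℓ+1))^2 / (1 - (σs (ℓ+1))^2)) :=
  upre_lower_bound_general ℓ hℓ σs s σ hnoise hs γ φ hγ hφ U hU
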